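/- Let 𝓕 be a finite family of distinct sets with levels 𝓕₁, …, 𝓕_t and auxiliary graph H, and let α be the size of the largest union-free subfamily of 𝓕. Suppose the vertex set {1, …, t} of H is partitioned into independent sets I₁, I₂, …, I_s by the following greedy algorithm: I₁ begins with vertex 1, and after choosing its j-th element a_j¹ it appends the least vertex a_{j+1}¹ > a_j¹ not adjacent to a_j¹, until no further vertex can be added; having constructed I₁, …, I_i, the set I_{i+1} begins with the least vertex not in I₁ ∪ ⋯ ∪ I_i, and after choosing its j-th element a_j^{i+1} it appends the least vertex a_{j+1}^{i+1} > a_j^{i+1} that lies in no previously chosen independent set and is not adjacent to a_j^{i+1}, until no further vertex can be added. Then for every i > 1, Σ_{j ∈ I_i} |𝓕_j| ≤ α − 2i + 3. -/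

import Mathlib

/-!
Let `b` be the least vertex of `I i`. By greediness every earlier class has a vertex below `b`
adjacent to `b`; these vertices are distinct, so some edge `(v, b)` of `H` has `b - v ≥ i - 1`.
Its two chains `X`, `Y` of ranks `v, …, b - 1`, together with the levels indexed by `I i` minus
the sets `X j ∪ Y k`, form a union-free family. At most one set is removed, so the family has at
least `∑_{j ∈ I i} |𝓕_j| - 1 + 2 (i - 1)` members. Union-freeness above rank `b` comes from the
independence of consecutive vertices of `I i`: a union `A ∪ B = C` with `C` of rank `r ∈ I i`
would, after extending `A` and `B` to chains, make the predecessor of `r` in `I i` adjacent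
to `r`.
-/

open scoped Classical in
/-- The maximal (by inclusion) sets of a family. -/
noncomputable def maxSets (G : Finset (Finset ℕ)) : Finset (Finset ℕ) :=
  G.filter fun X => ∀ Y ∈ G, ¬ X ⊂ Y

/-- `rem F k` is what remains of the family `F` after `k` rounds of peeling off
the maximal sets. -/
noncomputable def rem (F : Finset (Finset ℕ)) : ℕ → Finset (Finset ℕ)
  | 0 => F
  | k + 1 => rem F k \ maxSets (rem F k)

open scoped Classical in
/-- The length `t` of the longest chain (under inclusion) in the family `F`. -/
noncomputable def famHeight (F : Finset (Finset ℕ)) : ℕ :=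
  (Finset.filter (fun C : Finset (Finset ℕ) => IsChain (· ⊆ ·) (C : Set (Finset ℕ))) F.powerset).sup Finset.card

/-- The `i`-th level `𝓕ᵢ` of the family `F`: with `t = famHeight F`,
`𝓕_t` is the family of maximal sets of `F` and, downwards, `𝓕ᵢ` is the family of
maximal sets of `F \ (𝓕_{i+1} ∪ ⋯ ∪ 𝓕_t)`.  A set has *rank* `i` if it lies in
`level F i`. -/
noncomputable def level (F : Finset (Finset ℕ)) (i : ℕ) : Finset (Finset ℕ) :=
  maxSets (rem F (famHeight F - i))

/-- The auxiliary graph `H = H(F)` on the vertex set `{1, …, t}`, `t = famHeight F`: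
the pair `(i, i')` with `i < i'` is an edge if there exist two disjoint chains
`X` and `Y`, each consisting of exactly one set of each rank `j` for `i ≤ j ≤ i' - 1`,
such that at most one set in `{X j ∪ Y k}` has rank `i'` and every other set of this
form has rank greater than `i'` or does not belong to `F`. -/
def HEdge (F : Finset (Finset ℕ)) (i i' : ℕ) : Prop :=
  1 ≤ i ∧ i < i' ∧ i' ≤ famHeight F ∧
  ∃ X Y : ℕ → Finset ℕ,
    (∀ j, i ≤ j → j < i' → X j ∈ level F j) ∧
    (∀ j, i ≤ j → j < i' → Y j ∈ level F j) ∧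
    (∀ j k, i ≤ j → j < k → k < i' → X j ⊂ X k) ∧
    (∀ j k, i ≤ j → j < k → k < i' → Y j ⊂ Y k) ∧
    (∀ j k, i ≤ j → j < i' → i ≤ k → k < i' → X j ≠ Y k) ∧
    (∀ j k, i ≤ j → j < i' → i ≤ k → k < i' →
      X j ∪ Y k ∉ F ∨ X j ∪ Y k ∈ level F i' ∨
        ∃ r, i' < r ∧ r ≤ famHeight F ∧ X j ∪ Y k ∈ level F r) ∧
    (∀ j₁ k₁ j₂ k₂, i ≤ j₁ → j₁ < i' → i ≤ k₁ → k₁ < i' →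
      i ≤ j₂ → j₂ < i' → i ≤ k₂ → k₂ < i' →
      X j₁ ∪ Y k₁ ∈ level F i' → X j₂ ∪ Y k₂ ∈ level F i' →
      X j₁ ∪ Y k₁ = X j₂ ∪ Y k₂)

/-- A family of sets is *union-free* if there are no three distinct sets
`X, Y, Z` in the family with `X ∪ Y = Z`. -/
def UnionFree (F : Finset (Finset ℕ)) : Prop :=
  ∀ X ∈ F, ∀ Y ∈ F, ∀ Z ∈ F, X ≠ Y → X ≠ Z → Y ≠ Z → X ∪ Y ≠ Z

/-- The union of the independent sets `I 1, …, I (i-1)` chosen before stage `i`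
of the greedy algorithm. -/
def prevSets (I : ℕ → Finset ℕ) (i : ℕ) : Finset ℕ :=
  (Finset.Ico 1 i).biUnion I

open Finset

/-- The height of the part of `F` lying above `X`; a set of `F` has rank `i` exactly when this
height is `famHeight F + 1 - i`. -/
noncomputable def upHeight (F : Finset (Finset ℕ)) (X : Finset ℕ) : ℕ :=
  famHeight {Z ∈ F | X ⊆ Z}

section Height

variable {F G C : Finset (Finset ℕ)} {X Z : Finset ℕ}

lemma card_le_famHeight (hCG : C ⊆ G) (hC : IsChain (· ⊆ ·) (C : Set (Finset ℕ))) :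
    #C ≤ famHeight G := by
  classical
  exact le_sup (f := card) (mem_filter.2 ⟨mem_powerset.2 hCG, hC⟩)

lemma exists_chain_card_eq_famHeight (G : Finset (Finset ℕ)) :
    ∃ C ⊆ G, IsChain (· ⊆ ·) (C : Set (Finset ℕ)) ∧ #C = famHeight G := by
  classical
  obtain ⟨C, hC, hsup⟩ := exists_mem_eq_sup
    {C ∈ G.powerset | IsChain (· ⊆ ·) ((C : Finset (Finset ℕ)) : Set (Finset ℕ))} ⟨∅, by simp⟩
    card
  rw [mem_filter, mem_powerset] at hC
  exact ⟨C, hC.1, hC.2, hsup.symm⟩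

lemma IsChain.exists_subset_forall (hC : IsChain (· ⊆ ·) (C : Set (Finset ℕ)))
    (hne : C.Nonempty) : ∃ Z ∈ C, ∀ W ∈ C, Z ⊆ W := by
  obtain ⟨Z, hZ, hmin⟩ := C.exists_min_image card hne
  refine ⟨Z, hZ, fun W hW => ?_⟩
  rcases eq_or_ne W Z with rfl | hWZ
  · rfl
  · exact (hC hW hZ hWZ).resolve_left fun h => hWZ (eq_of_subset_of_card_le h (hmin W hW))

lemma one_le_upHeight (hX : X ∈ F) : 1 ≤ upHeight F X := by
  unfold upHeight
  simpa using card_le_famHeight (C := {X}) (by simpa using hX) (by simp)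

lemma upHeight_le_famHeight (F : Finset (Finset ℕ)) (X : Finset ℕ) :
    upHeight F X ≤ famHeight F := by
  unfold upHeight
  obtain ⟨C, hC, hchain, hcard⟩ := exists_chain_card_eq_famHeight {Z ∈ F | X ⊆ Z}
  exact hcard ▸ card_le_famHeight (hC.trans (filter_subset _ _)) hchain

lemma upHeight_lt_upHeight (hX : X ∈ F) (hXZ : X ⊂ Z) : upHeight F Z < upHeight F X := by
  obtain ⟨C, hC, hchain, hcard⟩ := exists_chain_card_eq_famHeight {W ∈ F | Z ⊆ W}
  have hZC : ∀ W ∈ C, Z ⊆ W := fun W hW => (mem_filter.1 (hC hW)).2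
  have hXC : X ∉ C := fun h => hXZ.2 (hZC X h)
  have hins : #(insert X C) ≤ upHeight F X := by
    refine card_le_famHeight (fun W hW => ?_) ?_
    · rcases mem_insert.1 hW with rfl | hW
      · exact mem_filter.2 ⟨hX, subset_rfl⟩
      · exact mem_filter.2 ⟨(mem_filter.1 (hC hW)).1, hXZ.1.trans (hZC W hW)⟩
    · rw [coe_insert]
      exact hchain.insert fun W hW _ => Or.inl (hXZ.1.trans (hZC W hW))
  rw [card_insert_of_notMem hXC, hcard] at hins
  exact hins

lemma exists_ssuperset_le_upHeight {m : ℕ} (hm : m + 2 ≤ upHeight F X) :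
    ∃ Z ∈ F, X ⊂ Z ∧ m + 1 ≤ upHeight F Z := by
  obtain ⟨C, hC, hchain, hcard⟩ := exists_chain_card_eq_famHeight {W ∈ F | X ⊆ W}
  have hCX : ∀ W ∈ C, W ∈ F ∧ X ⊆ W := fun W hW => mem_filter.1 (hC hW)
  have hcard' : m + 1 ≤ #(C.erase X) := by
    have := pred_card_le_card_erase (s := C) (a := X)
    unfold upHeight at hm
    omega
  obtain ⟨Z, hZ, hZle⟩ := (hchain.mono (coe_subset.2 (erase_subset X C))).exists_subset_forall
    (card_pos.1 (by omega))
  obtain ⟨hZX, hZC⟩ := mem_erase.1 hZ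
  refine ⟨Z, (hCX Z hZC).1, ssubset_of_subset_of_ne (hCX Z hZC).2 hZX.symm, ?_⟩
  refine hcard'.trans (card_le_famHeight (fun W hW => mem_filter.2 ⟨?_, hZle W hW⟩)
    (hchain.mono (coe_subset.2 (erase_subset X C))))
  exact (hCX W (mem_of_mem_erase hW)).1

end Height

section Level

variable {F : Finset (Finset ℕ)} {X Z : Finset ℕ} {i j p q : ℕ}

lemma mem_maxSets {G : Finset (Finset ℕ)} : X ∈ maxSets G ↔ X ∈ G ∧ ∀ Y ∈ G, ¬ X ⊂ Y := by
  classical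
  simp [maxSets]

lemma maxSets_filter_lt_upHeight (F : Finset (Finset ℕ)) (m : ℕ) :
    maxSets {X ∈ F | m < upHeight F X} = {X ∈ F | upHeight F X = m + 1} := by
  ext X
  simp only [mem_maxSets, mem_filter]
  constructor
  · rintro ⟨⟨hX, hm⟩, hmax⟩
    refine ⟨hX, le_antisymm (not_lt.1 fun h => ?_) hm⟩
    obtain ⟨Z, hZ, hXZ, hZm⟩ := exists_ssuperset_le_upHeight (F := F) (X := X) (m := m) h
    exact hmax Z ⟨hZ, hZm⟩ hXZ
  · rintro ⟨hX, hm⟩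
    refine ⟨⟨hX, by omega⟩, fun Y hY hXY => ?_⟩
    have := upHeight_lt_upHeight hX hXY
    omega

lemma rem_eq_filter (F : Finset (Finset ℕ)) (m : ℕ) : rem F m = {X ∈ F | m < upHeight F X} := by
  induction m with
  | zero =>
    ext X
    simp only [rem, mem_filter, iff_self_and]
    exact fun hX => one_le_upHeight hX
  | succ m ih =>
    rw [rem, ih, maxSets_filter_lt_upHeight]
    ext X
    simp only [mem_sdiff, mem_filter]
    constructor
    · rintro ⟨⟨hX, hm⟩, hne⟩
      exact ⟨hX, lt_of_le_of_ne hm fun h => hne ⟨hX, h.symm⟩⟩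
    · rintro ⟨hX, hm⟩
      exact ⟨⟨hX, by omega⟩, fun h => by omega⟩

lemma mem_level_iff : X ∈ level F i ↔ X ∈ F ∧ upHeight F X = famHeight F - i + 1 := by
  rw [level, rem_eq_filter, maxSets_filter_lt_upHeight, mem_filter]

lemma level_subset (F : Finset (Finset ℕ)) (i : ℕ) : level F i ⊆ F :=
  fun _ h => (mem_level_iff.1 h).1

lemma exists_mem_level (hX : X ∈ F) : ∃ i ≤ famHeight F, X ∈ level F i := by
  have := one_le_upHeight hX
  have := upHeight_le_famHeight F X
  exact ⟨famHeight F + 1 - upHeight F X, by omega, mem_level_iff.2 ⟨hX, by omega⟩⟩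

/-- For `i > famHeight F` the junk value `level F i = level F (famHeight F)` makes the bounds
necessary. -/
lemma eq_of_mem_level (hi : i ≤ famHeight F) (hj : j ≤ famHeight F)
    (hXi : X ∈ level F i) (hXj : X ∈ level F j) : i = j := by
  rw [mem_level_iff] at hXi hXj
  omega

lemma lt_of_mem_level_of_ssubset (hX : X ∈ level F i) (hZ : Z ∈ level F j) (hXZ : X ⊂ Z) :
    i < j := by
  rw [mem_level_iff] at hX hZ
  have := upHeight_lt_upHeight hX.1 hXZ
  omega

lemma le_of_mem_level_of_subset (hi : i ≤ famHeight F) (hj : j ≤ famHeight F)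
    (hX : X ∈ level F i) (hZ : Z ∈ level F j) (hXZ : X ⊆ Z) : i ≤ j := by
  rcases hXZ.eq_or_ssubset with rfl | h
  · exact (eq_of_mem_level hi hj hX hZ).le
  · exact (lt_of_mem_level_of_ssubset hX hZ h).le

lemma eq_of_mem_level_of_subset (hX : X ∈ level F i) (hZ : Z ∈ level F i) (hXZ : X ⊆ Z) :
    X = Z :=
  hXZ.eq_of_not_ssubset fun h => (lt_of_mem_level_of_ssubset hX hZ h).false

lemma exists_ssuperset_mem_level_succ (hX : X ∈ level F i) (hi : i < famHeight F) :
    ∃ Z ∈ level F (i + 1), X ⊂ Z := by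
  rw [mem_level_iff] at hX
  obtain ⟨Z, hZ, hXZ, hZm⟩ :=
    exists_ssuperset_le_upHeight (F := F) (X := X) (m := famHeight F - (i + 1)) (by omega)
  have := upHeight_lt_upHeight hX.1 hXZ
  exact ⟨Z, mem_level_iff.2 ⟨hZ, by omega⟩, hXZ⟩

lemma exists_chain_of_mem_level (hX : X ∈ level F p) (hpq : p ≤ q) (hq : q ≤ famHeight F) :
    ∃ g : ℕ → Finset ℕ, g p = X ∧ (∀ j, p ≤ j → j ≤ q → g j ∈ level F j) ∧
      StrictMonoOn g (Set.Icc p q) := by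
  induction q, hpq using Nat.le_induction with
  | base =>
    refine ⟨fun _ => X, rfl, fun j hpj hjp => ?_, fun j hj k hk hjk => ?_⟩
    · rwa [le_antisymm hjp hpj]
    · simp only [Set.mem_Icc] at hj hk
      omega
  | succ q hpq ih =>
    obtain ⟨g, hgp, hg, hgmono⟩ := ih (by omega)
    obtain ⟨Z, hZ, hgZ⟩ := exists_ssuperset_mem_level_succ (hg q hpq le_rfl) (by omega)
    refine ⟨Function.update g (q + 1) Z, by simp [hgp, show p ≠ q + 1 by omega], ?_, ?_⟩
    · intro j hpj hjq
      rcases eq_or_ne j (q + 1) with rfl | hj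
      · simpa using hZ
      · simpa [hj] using hg j hpj (by omega)
    · intro j hj k hk hjk
      simp only [Set.mem_Icc] at hj hk
      have hjq : j ≠ q + 1 := by omega
      rcases eq_or_ne k (q + 1) with rfl | hk'
      · simp only [Function.update_self, Function.update_of_ne hjq]
        exact lt_of_le_of_lt (hgmono.monotoneOn ⟨hj.1, by omega⟩ ⟨hpq, le_rfl⟩ (by omega))
          hgZ
      · simp only [Function.update_of_ne hjq, Function.update_of_ne hk']
        exact hgmono ⟨hj.1, by omega⟩ ⟨hk.1, by omega⟩ hjk

end Level

structure EdgeWitness (F : Finset (Finset ℕ)) (i i' : ℕ) (X Y : ℕ → Finset ℕ) : Prop where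
  memX : ∀ j, i ≤ j → j < i' → X j ∈ level F j
  memY : ∀ j, i ≤ j → j < i' → Y j ∈ level F j
  ssubsetX : ∀ j k, i ≤ j → j < k → k < i' → X j ⊂ X k
  ssubsetY : ∀ j k, i ≤ j → j < k → k < i' → Y j ⊂ Y k
  ne : ∀ j k, i ≤ j → j < i' → i ≤ k → k < i' → X j ≠ Y k
  union_rank : ∀ j k, i ≤ j → j < i' → i ≤ k → k < i' →
    X j ∪ Y k ∉ F ∨ X j ∪ Y k ∈ level F i' ∨
      ∃ r, i' < r ∧ r ≤ famHeight F ∧ X j ∪ Y k ∈ level F r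
  union_unique : ∀ j₁ k₁ j₂ k₂, i ≤ j₁ → j₁ < i' → i ≤ k₁ → k₁ < i' →
    i ≤ j₂ → j₂ < i' → i ≤ k₂ → k₂ < i' →
    X j₁ ∪ Y k₁ ∈ level F i' → X j₂ ∪ Y k₂ ∈ level F i' → X j₁ ∪ Y k₁ = X j₂ ∪ Y k₂

section Edge

variable {F : Finset (Finset ℕ)} {A B : Finset ℕ} {i i' p q : ℕ}

lemma hEdge_iff : HEdge F i i' ↔
    1 ≤ i ∧ i < i' ∧ i' ≤ famHeight F ∧ ∃ X Y, EdgeWitness F i i' X Y := by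
  constructor
  · rintro ⟨h₁, h₂, h₃, X, Y, h₄, h₅, h₆, h₇, h₈, h₉, h₁₀⟩
    exact ⟨h₁, h₂, h₃, X, Y, h₄, h₅, h₆, h₇, h₈, h₉, h₁₀⟩
  · rintro ⟨h₁, h₂, h₃, X, Y, h₄, h₅, h₆, h₇, h₈, h₉, h₁₀⟩
    exact ⟨h₁, h₂, h₃, X, Y, h₄, h₅, h₆, h₇, h₈, h₉, h₁₀⟩

/-- Extending `A` and `B` to chains of consecutive ranks gives an edge of `H`: every union of
two of their sets contains `A ∪ B`, so it is `A ∪ B` itself or has larger rank. -/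
lemma hEdge_of_union_mem_level (hi : 1 ≤ i) (hii' : i < i') (hi' : i' ≤ famHeight F)
    (hA : A ∈ level F p) (hB : B ∈ level F q) (hp : p ≤ i) (hq : q ≤ i)
    (hAB : A ∪ B ∈ level F i') : HEdge F i i' := by
  obtain ⟨X, hXp, hX, hXmono⟩ := exists_chain_of_mem_level hA (q := i' - 1) (by omega) (by omega)
  obtain ⟨Y, hYq, hY, hYmono⟩ := exists_chain_of_mem_level hB (q := i' - 1) (by omega) (by omega)
  have hAX : ∀ j, i ≤ j → j < i' → A ⊆ X j := fun j hj hj' =>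
    hXp ▸ hXmono.monotoneOn ⟨le_rfl, by omega⟩ ⟨by omega, by omega⟩ (by omega)
  have hBY : ∀ j, i ≤ j → j < i' → B ⊆ Y j := fun j hj hj' =>
    hYq ▸ hYmono.monotoneOn ⟨le_rfl, by omega⟩ ⟨by omega, by omega⟩ (by omega)
  have hX' : ∀ j, i ≤ j → j < i' → X j ∈ level F j := fun j hj hj' => hX j (by omega) (by omega)
  have hY' : ∀ j, i ≤ j → j < i' → Y j ∈ level F j := fun j hj hj' => hY j (by omega) (by omega)
  refine hEdge_iff.2 ⟨hi, hii', hi', X, Y, hX', hY',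
    fun j k hj hjk hk => hXmono ⟨by omega, by omega⟩ ⟨by omega, by omega⟩ hjk,
    fun j k hj hjk hk => hYmono ⟨by omega, by omega⟩ ⟨by omega, by omega⟩ hjk, ?_, ?_, ?_⟩
  · intro j k hj hj' hk hk' hXY
    obtain rfl : j = k := eq_of_mem_level (by omega) (by omega) (hX' j hj hj') (hXY ▸ hY' k hk hk')
    have := le_of_mem_level_of_subset hi' (by omega) hAB (hX' j hj hj')
      (union_subset (hAX j hj hj') (hXY ▸ hBY j hj hj'))
    omega
  · intro j k hj hj' hk hk'
    by_cases hU : X j ∪ Y k ∈ F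
    · obtain ⟨r, hr, hUr⟩ := exists_mem_level hU
      rcases (le_of_mem_level_of_subset hi' hr hAB hUr
        (union_subset_union (hAX j hj hj') (hBY k hk hk'))).eq_or_lt with rfl | hlt
      · exact Or.inr (Or.inl hUr)
      · exact Or.inr (Or.inr ⟨r, hlt, hr, hUr⟩)
    · exact Or.inl hU
  · intro j₁ k₁ j₂ k₂ hj₁ hj₁' hk₁ hk₁' hj₂ hj₂' hk₂ hk₂' h₁ h₂
    rw [← eq_of_mem_level_of_subset hAB h₁ (union_subset_union (hAX _ hj₁ hj₁') (hBY _ hk₁ hk₁')),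
      ← eq_of_mem_level_of_subset hAB h₂ (union_subset_union (hAX _ hj₂ hj₂') (hBY _ hk₂ hk₂'))]

end Edge

lemma Finset.exists_greatest_lt {S : Finset ℕ} {b : ℕ} (h : ∃ u ∈ S, u < b) :
    ∃ v ∈ S, v < b ∧ ∀ w ∈ S, w < b → w ≤ v := by
  obtain ⟨v, hv, hmax⟩ := {u ∈ S | u < b}.exists_max_image id (by simpa [Finset.Nonempty] using h)
  rw [mem_filter] at hv
  exact ⟨v, hv.1, hv.2, fun w hw hwb => hmax w (mem_filter.2 ⟨hw, hwb⟩)⟩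

def NoUnionAbove (F : Finset (Finset ℕ)) (R : Finset ℕ) (b : ℕ) : Prop :=
  ∀ ⦃A B C : Finset ℕ⦄ ⦃p q r : ℕ⦄, A ∈ level F p → B ∈ level F q → C ∈ level F r →
    (p < b ∨ p ∈ R) → (q < b ∨ q ∈ R) → r ∈ R → b < r → A ≠ C → B ≠ C → A ∪ B ≠ C

/-- Such a union would make the predecessor of `r` in `R` adjacent to `r`. -/
lemma noUnionAbove_of_not_hEdge {F : Finset (Finset ℕ)} {R : Finset ℕ} {b : ℕ}
    (hR : ∀ r ∈ R, 1 ≤ r ∧ r ≤ famHeight F) (hb : b ∈ R)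
    (hnonadj : ∀ r ∈ R, ∀ r' ∈ R, r < r' → (∀ x ∈ R, r < x → r' ≤ x) → ¬ HEdge F r r') :
    NoUnionAbove F R b := by
  intro A B C p q r hA hB hC hp hq hr hbr hAC hBC hU
  obtain ⟨r', hr'R, hr'r, hr'max⟩ := exists_greatest_lt ⟨b, hb, hbr⟩
  have hrank : ∀ {D : Finset ℕ} {d : ℕ}, D ∈ level F d → (d < b ∨ d ∈ R) → D ⊆ C → D ≠ C →
      d ≤ r' := by
    intro D d hD hd hDC hne
    have hdr := lt_of_mem_level_of_ssubset hD hC (ssubset_of_subset_of_ne hDC hne)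
    rcases hd with hd | hd
    · exact hd.le.trans (hr'max b hb hbr)
    · exact hr'max d hd hdr
  refine hnonadj r' hr'R r hr hr'r (fun x hx hr'x => not_lt.1 fun hxr => ?_) ?_
  · exact (hr'max x hx hxr).not_gt hr'x
  · exact hEdge_of_union_mem_level (hR r' hr'R).1 hr'r (hR r hr).2 hA hB
      (hrank hA hp (hU ▸ subset_union_left) hAC) (hrank hB hq (hU ▸ subset_union_right) hBC)
      (hU ▸ hC)

section Greedy

variable {Adj : ℕ → ℕ → Prop} {I : ℕ → Finset ℕ} {s t i b : ℕ}

lemma exists_adj_below_of_greedy {J : Finset ℕ} (hbJ : b ∉ J) (hlow : ∃ u ∈ J, u < b)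
    (hnext : ∀ v ∈ J, v < b → ¬ Adj v b → ∃ w ∈ J, v < w ∧ w ≤ b) :
    ∃ v ∈ J, v < b ∧ Adj v b := by
  obtain ⟨v, hv, hvb, hvmax⟩ := exists_greatest_lt hlow
  refine ⟨v, hv, hvb, by_contra fun h => ?_⟩
  obtain ⟨w, hw, hvw, hwb⟩ := hnext v hv hvb h
  exact (hvmax w hw (lt_of_le_of_ne hwb (ne_of_mem_of_not_mem hw hbJ))).not_gt hvw

lemma exists_adj_sub_ge_of_disjoint (hi : 1 < i)
    (hdisj : ∀ j ∈ Ico 1 i, ∀ k ∈ Ico 1 i, j ≠ k → Disjoint (I j) (I k))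
    (hadj : ∀ j ∈ Ico 1 i, ∃ v ∈ I j, v < b ∧ Adj v b) : ∃ v, Adj v b ∧ i - 1 ≤ b - v := by
  choose! f hfI hfb hfadj using hadj
  have hinj : Set.InjOn f (Ico 1 i) := fun j hj k hk hjk =>
    by_contra fun hne => disjoint_left.1 (hdisj j hj k hk hne) (hfI j hj) (hjk ▸ hfI k hk)
  obtain ⟨j, hj, hmin⟩ := (Ico 1 i).exists_min_image f ⟨1, mem_Ico.2 ⟨le_rfl, hi⟩⟩
  refine ⟨f j, hfadj j hj, ?_⟩
  have hsub : (Ico 1 i).image f ⊆ Ico (f j) b := by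
    intro x hx
    obtain ⟨k, hk, rfl⟩ := mem_image.1 hx
    exact mem_Ico.2 ⟨hmin k hk, hfb k hk⟩
  simpa [card_image_of_injOn hinj] using card_le_card hsub

lemma exists_adj_sub_ge_of_greedy
    (hne : ∀ i ∈ Icc 1 s, (I i).Nonempty)
    (hdisj : ∀ i ∈ Icc 1 s, ∀ j ∈ Icc 1 s, i ≠ j → Disjoint (I i) (I j))
    (hmin : ∀ i ∈ Icc 1 s, ∀ v ∈ I i, (∀ w ∈ I i, v ≤ w) →
      ∀ u ∈ Icc 1 t, u ∉ prevSets I i → v ≤ u)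
    (hnextMin : ∀ i ∈ Icc 1 s, ∀ v ∈ I i, ∀ u ∈ Icc 1 t,
      v < u → u ∉ prevSets I i → ¬ Adj v u → ∃ w ∈ I i, v < w ∧ w ≤ u)
    (hi : 1 < i) (his : i ≤ s) (hb : b ∈ I i) (hbt : b ∈ Icc 1 t) :
    ∃ v, Adj v b ∧ i - 1 ≤ b - v := by
  have hIcc : ∀ j ∈ Ico 1 i, j ∈ Icc 1 s := fun j hj => by
    rw [mem_Ico] at hj; exact mem_Icc.2 ⟨hj.1, by omega⟩
  have hnotMem : ∀ j ∈ Ico 1 i, b ∉ I j := fun j hj hbj =>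
    disjoint_left.1 (hdisj j (hIcc j hj) i (mem_Icc.2 ⟨by omega, his⟩)
      (mem_Ico.1 hj).2.ne) hbj hb
  refine exists_adj_sub_ge_of_disjoint hi (fun j hj k hk => hdisj j (hIcc j hj) k (hIcc k hk))
    fun j hj => ?_
  have hbprev : b ∉ prevSets I j := by
    simp only [prevSets, mem_biUnion, not_exists, not_and]
    exact fun k hk => hnotMem k (mem_Ico.2 ⟨(mem_Ico.1 hk).1, by simp at hk hj; omega⟩)
  have hmin' := (I j).min'_mem (hne j (hIcc j hj))
  refine exists_adj_below_of_greedy (hnotMem j hj) ⟨_, hmin', lt_of_le_of_ne ?_ ?_⟩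
    fun v hv hvb => hnextMin j (hIcc j hj) v hv b hbt hvb hbprev
  · exact hmin j (hIcc j hj) _ hmin' (fun w hw => min'_le _ _ hw) b hbt hbprev
  · exact ne_of_mem_of_not_mem hmin' (hnotMem j hj)

end Greedy

section WitnessFamily

variable {F : Finset (Finset ℕ)} {R : Finset ℕ} {v b c : ℕ} {X Y : ℕ → Finset ℕ}
  {A B C W : Finset ℕ}

def lowerChains (X Y : ℕ → Finset ℕ) (v b : ℕ) : Finset (Finset ℕ) :=
  (Ico v b).image X ∪ (Ico v b).image Y

def chainUnions (X Y : ℕ → Finset ℕ) (v b : ℕ) : Finset (Finset ℕ) :=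
  (Ico v b ×ˢ Ico v b).image fun jk => X jk.1 ∪ Y jk.2

noncomputable def witnessFamily (F : Finset (Finset ℕ)) (R : Finset ℕ) (X Y : ℕ → Finset ℕ) (v b : ℕ) :
    Finset (Finset ℕ) :=
  (R.biUnion (level F) \ chainUnions X Y v b) ∪ lowerChains X Y v b

lemma mem_lowerChains : W ∈ lowerChains X Y v b ↔ ∃ j, v ≤ j ∧ j < b ∧ (X j = W ∨ Y j = W) := by
  simp only [lowerChains, mem_union, mem_image, mem_Ico]
  constructor
  · rintro (⟨j, hj, h⟩ | ⟨j, hj, h⟩)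
    exacts [⟨j, hj.1, hj.2, Or.inl h⟩, ⟨j, hj.1, hj.2, Or.inr h⟩]
  · rintro ⟨j, hj, hj', h | h⟩
    exacts [Or.inl ⟨j, ⟨hj, hj'⟩, h⟩, Or.inr ⟨j, ⟨hj, hj'⟩, h⟩]

lemma union_eq_or_of_ssubset {g : ℕ → Finset ℕ}
    (hg : ∀ j k, v ≤ j → j < k → k < b → g j ⊂ g k) {j k : ℕ}
    (hj : v ≤ j) (hj' : j < b) (hk : v ≤ k) (hk' : k < b) :
    g j ∪ g k = g j ∨ g j ∪ g k = g k := by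
  rcases lt_trichotomy j k with h | rfl | h
  · exact Or.inr (union_eq_right.2 (hg j k hj h hk').subset)
  · exact Or.inl (union_self _)
  · exact Or.inl (union_eq_left.2 (hg k j hk h hj').subset)

lemma card_image_Ico_of_ssubset {g : ℕ → Finset ℕ}
    (hg : ∀ j k, v ≤ j → j < k → k < b → g j ⊂ g k) : #((Ico v b).image g) = b - v := by
  have hmono : StrictMonoOn g (Ico v b : Set ℕ) := fun j hj k hk hjk => by
    simp only [coe_Ico, Set.mem_Ico] at hj hk
    exact hg j k hj.1 hjk hk.2
  rw [card_image_of_injOn hmono.injOn, Nat.card_Ico]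

lemma mem_lowerChains_of_ssubset_of_mem_level (hR : ∀ r ∈ R, b ≤ r)
    (hA : A ∈ witnessFamily F R X Y v b) (hC : C ∈ level F c) (hc : c ≤ b) (hAC : A ⊂ C) :
    A ∈ lowerChains X Y v b := by
  rcases mem_union.1 hA with hT | hL
  · obtain ⟨r, hr, hAr⟩ := mem_biUnion.1 (mem_sdiff.1 hT).1
    have := lt_of_mem_level_of_ssubset hAr hC hAC
    have := hR r hr
    omega
  · exact hL

namespace EdgeWitness

lemma exists_level_of_mem_lowerChains (hE : EdgeWitness F v b X Y)
    (hW : W ∈ lowerChains X Y v b) : ∃ j, v ≤ j ∧ j < b ∧ W ∈ level F j := by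
  obtain ⟨j, hj, hj', rfl | rfl⟩ := mem_lowerChains.1 hW
  exacts [⟨j, hj, hj', hE.memX j hj hj'⟩, ⟨j, hj, hj', hE.memY j hj hj'⟩]

lemma exists_level_of_mem_witnessFamily (hE : EdgeWitness F v b X Y)
    (hW : W ∈ witnessFamily F R X Y v b) : ∃ p, W ∈ level F p ∧ (p < b ∨ p ∈ R) := by
  rcases mem_union.1 hW with hT | hL
  · obtain ⟨r, hr, hWr⟩ := mem_biUnion.1 (mem_sdiff.1 hT).1
    exact ⟨r, hWr, Or.inr hr⟩
  · obtain ⟨j, -, hj, hWj⟩ := hE.exists_level_of_mem_lowerChains hL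
    exact ⟨j, hWj, Or.inl hj⟩

lemma witnessFamily_subset (hE : EdgeWitness F v b X Y) : witnessFamily F R X Y v b ⊆ F :=
  fun _ hW => by
    obtain ⟨p, hWp, -⟩ := hE.exists_level_of_mem_witnessFamily hW
    exact level_subset F p hWp

lemma union_notMem_witnessFamily (hE : EdgeWitness F v b X Y) (hb : b ≤ famHeight F)
    {j k : ℕ} (hj : v ≤ j) (hj' : j < b) (hk : v ≤ k) (hk' : k < b) :
    X j ∪ Y k ∉ witnessFamily F R X Y v b := by
  simp only [witnessFamily, mem_union, mem_sdiff]
  rintro (⟨-, hU⟩ | hL)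
  · exact hU (mem_image.2 ⟨(j, k), mem_product.2 ⟨mem_Ico.2 ⟨hj, hj'⟩, mem_Ico.2 ⟨hk, hk'⟩⟩, rfl⟩)
  · obtain ⟨m, -, hm, hUm⟩ := hE.exists_level_of_mem_lowerChains hL
    rcases hE.union_rank j k hj hj' hk hk' with hF | hUb | ⟨r, hr, hrt, hUr⟩
    · exact hF (level_subset F m hUm)
    · have := eq_of_mem_level (by omega) hb hUm hUb
      omega
    · have := eq_of_mem_level (by omega) hrt hUm hUr
      omega

lemma union_eq_of_mem_lowerChains (hE : EdgeWitness F v b X Y) (hb : b ≤ famHeight F)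
    (hA : A ∈ lowerChains X Y v b) (hB : B ∈ lowerChains X Y v b)
    (hAB : A ∪ B ∈ witnessFamily F R X Y v b) : A ∪ B = A ∨ A ∪ B = B := by
  obtain ⟨j, hj, hj', rfl | rfl⟩ := mem_lowerChains.1 hA <;>
    obtain ⟨k, hk, hk', rfl | rfl⟩ := mem_lowerChains.1 hB
  · exact union_eq_or_of_ssubset hE.ssubsetX hj hj' hk hk'
  · exact absurd hAB (hE.union_notMem_witnessFamily hb hj hj' hk hk')
  · rw [union_comm] at hAB
    exact absurd hAB (hE.union_notMem_witnessFamily hb hk hk' hj hj')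
  · exact union_eq_or_of_ssubset hE.ssubsetY hj hj' hk hk'

/-- Below rank `b` only the two chains are present, and their mixed unions were removed. -/
lemma unionFree_witnessFamily (hE : EdgeWitness F v b X Y) (hb : b ≤ famHeight F)
    (hR : ∀ r ∈ R, b ≤ r) (hNU : NoUnionAbove F R b) :
    UnionFree (witnessFamily F R X Y v b) := by
  intro A hA B hB C hC _ hAC hBC hU
  obtain ⟨p, hAp, hp⟩ := hE.exists_level_of_mem_witnessFamily hA
  obtain ⟨q, hBq, hq⟩ := hE.exists_level_of_mem_witnessFamily hB
  obtain ⟨c, hCc, hc⟩ := hE.exists_level_of_mem_witnessFamily hC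
  by_cases hbc : b < c
  · exact hNU hAp hBq hCc hp hq (hc.resolve_left (by omega)) hbc hAC hBC hU
  have hlow : ∀ D ∈ witnessFamily F R X Y v b, D ⊆ C → D ≠ C → D ∈ lowerChains X Y v b :=
    fun D hD hDC hne => mem_lowerChains_of_ssubset_of_mem_level hR hD hCc (by omega)
      (ssubset_of_subset_of_ne hDC hne)
  rcases hE.union_eq_of_mem_lowerChains hb (hlow A hA (hU ▸ subset_union_left) hAC)
    (hlow B hB (hU ▸ subset_union_right) hBC) (hU ▸ hC) with h | h
  · exact hAC (h.symm.trans hU)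
  · exact hBC (h.symm.trans hU)

/-- Only one set is lost: a union `X j ∪ Y k` of rank in `R` has rank `b` by `NoUnionAbove`,
and there is at most one such set. -/
lemma card_inter_chainUnions_le_one (hE : EdgeWitness F v b X Y)
    (hR : ∀ r ∈ R, b ≤ r ∧ r ≤ famHeight F) (hNU : NoUnionAbove F R b) :
    #(R.biUnion (level F) ∩ chainUnions X Y v b) ≤ 1 := by
  have hlev : ∀ W ∈ R.biUnion (level F) ∩ chainUnions X Y v b, ∃ j k, v ≤ j ∧ j < b ∧
      v ≤ k ∧ k < b ∧ X j ∪ Y k = W ∧ W ∈ level F b := by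
    intro W hW
    obtain ⟨hT, hU⟩ := mem_inter.1 hW
    obtain ⟨r, hr, hWr⟩ := mem_biUnion.1 hT
    obtain ⟨⟨j, k⟩, hjk, rfl⟩ := mem_image.1 hU
    simp only [mem_product, mem_Ico] at hjk
    obtain ⟨⟨hj, hj'⟩, hk, hk'⟩ := hjk
    refine ⟨j, k, hj, hj', hk, hk', rfl, ?_⟩
    rcases hE.union_rank j k hj hj' hk hk' with hF | hUb | ⟨r', hr', hr't, hUr'⟩
    · exact absurd (level_subset F r hWr) hF
    · exact hUb
    · obtain rfl := eq_of_mem_level (hR r hr).2 hr't hWr hUr'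
      have hne : ∀ {D : Finset ℕ} {d : ℕ}, D ∈ level F d → d < b → D ≠ X j ∪ Y k :=
        fun hD hd h => by
          have := eq_of_mem_level (by omega) hr't hD (h ▸ hWr)
          omega
      exact absurd rfl (hNU (hE.memX j hj hj') (hE.memY k hk hk') hWr (Or.inl hj') (Or.inl hk')
        hr hr' (hne (hE.memX j hj hj') hj') (hne (hE.memY k hk hk') hk'))
  refine card_le_one.2 fun W₁ h₁ W₂ h₂ => ?_
  obtain ⟨j₁, k₁, hj₁, hj₁', hk₁, hk₁', rfl, hW₁⟩ := hlev W₁ h₁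
  obtain ⟨j₂, k₂, hj₂, hj₂', hk₂, hk₂', rfl, hW₂⟩ := hlev W₂ h₂
  exact hE.union_unique j₁ k₁ j₂ k₂ hj₁ hj₁' hk₁ hk₁' hj₂ hj₂' hk₂ hk₂' hW₁ hW₂

lemma card_witnessFamily (hE : EdgeWitness F v b X Y) (hb : b ≤ famHeight F)
    (hR : ∀ r ∈ R, b ≤ r ∧ r ≤ famHeight F) (hNU : NoUnionAbove F R b) :
    #(R.biUnion (level F)) + 2 * (b - v) ≤ #(witnessFamily F R X Y v b) + 1 := by
  have hXY : Disjoint ((Ico v b).image X) ((Ico v b).image Y) := by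
    refine disjoint_left.2 fun W hX hY => ?_
    obtain ⟨j, hj, rfl⟩ := mem_image.1 hX
    obtain ⟨k, hk, hjk⟩ := mem_image.1 hY
    rw [mem_Ico] at hj hk
    exact hE.ne j k hj.1 hj.2 hk.1 hk.2 hjk.symm
  have hTL : Disjoint (R.biUnion (level F) \ chainUnions X Y v b) (lowerChains X Y v b) := by
    refine disjoint_left.2 fun W hT hL => ?_
    obtain ⟨r, hr, hWr⟩ := mem_biUnion.1 (mem_sdiff.1 hT).1
    obtain ⟨j, -, hj, hWj⟩ := hE.exists_level_of_mem_lowerChains hL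
    have := eq_of_mem_level (hR r hr).2 (by omega) hWr hWj
    have := (hR r hr).1
    omega
  have hL : #(lowerChains X Y v b) = 2 * (b - v) := by
    rw [lowerChains, card_union_of_disjoint hXY, card_image_Ico_of_ssubset hE.ssubsetX,
      card_image_Ico_of_ssubset hE.ssubsetY, two_mul]
  have := card_sdiff_add_card_inter (R.biUnion (level F)) (chainUnions X Y v b)
  have := hE.card_inter_chainUnions_le_one hR hNU
  rw [witnessFamily, card_union_of_disjoint hTL, hL]
  omega

lemma exists_unionFree (hE : EdgeWitness F v b X Y) (hb : b ≤ famHeight F)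
    (hR : ∀ r ∈ R, b ≤ r ∧ r ≤ famHeight F) (hNU : NoUnionAbove F R b) :
    ∃ G ⊆ F, UnionFree G ∧ ∑ r ∈ R, #(level F r) + 2 * (b - v) ≤ #G + 1 := by
  refine ⟨_, hE.witnessFamily_subset, hE.unionFree_witnessFamily hb (fun r hr => (hR r hr).1) hNU,
    ?_⟩
  rw [← card_biUnion fun r hr r' hr' hne => disjoint_left.2 fun W h h' =>
    hne (eq_of_mem_level (hR r hr).2 (hR r' hr').2 h h')]
  exact hE.card_witnessFamily hb hR hNU

end EdgeWitness

end WitnessFamily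

/-- The greedy algorithm enters only through the properties `hmin`, `hnextNonadj` and `hnextMin`
of the classes it produces. -/
theorem sum_levels_greedy_le_general (F : Finset (Finset ℕ)) (α : ℕ)
    (hα : IsGreatest {k | ∃ G ⊆ F, UnionFree G ∧ G.card = k} α)
    (s : ℕ) (I : ℕ → Finset ℕ)
    (hsub : ∀ i ∈ Finset.Icc 1 s, I i ⊆ Finset.Icc 1 (famHeight F))
    (hne : ∀ i ∈ Finset.Icc 1 s, (I i).Nonempty)
    (hdisj : ∀ i ∈ Finset.Icc 1 s, ∀ j ∈ Finset.Icc 1 s, i ≠ j → Disjoint (I i) (I j))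
    (hmin : ∀ i ∈ Finset.Icc 1 s, ∀ v ∈ I i, (∀ w ∈ I i, v ≤ w) →
      ∀ u ∈ Finset.Icc 1 (famHeight F), u ∉ prevSets I i → v ≤ u)
    (hnextNonadj : ∀ i ∈ Finset.Icc 1 s, ∀ v ∈ I i, ∀ w ∈ I i, v < w →
      (∀ x ∈ I i, v < x → w ≤ x) → ¬ HEdge F v w)
    (hnextMin : ∀ i ∈ Finset.Icc 1 s, ∀ v ∈ I i, ∀ u ∈ Finset.Icc 1 (famHeight F),
      v < u → u ∉ prevSets I i → ¬ HEdge F v u → ∃ w ∈ I i, v < w ∧ w ≤ u) :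
    ∀ i, 1 < i → i ≤ s →
      ((∑ j ∈ I i, (level F j).card : ℤ)) ≤ (α : ℤ) - 2 * (i : ℤ) + 3 := by
  intro i hi his
  have hiIcc : i ∈ Finset.Icc 1 s := mem_Icc.2 ⟨by omega, his⟩
  have hIi : ∀ r ∈ I i, 1 ≤ r ∧ r ≤ famHeight F := fun r hr => mem_Icc.1 (hsub i hiIcc hr)
  set b := (I i).min' (hne i hiIcc)
  have hb : b ∈ I i := min'_mem _ _
  obtain ⟨v, hvb, hiv⟩ := exists_adj_sub_ge_of_greedy hne hdisj hmin hnextMin hi his hb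
    (hsub i hiIcc hb)
  obtain ⟨-, -, hbt, X, Y, hE⟩ := hEdge_iff.1 hvb
  obtain ⟨G, hGF, hG, hcard⟩ := hE.exists_unionFree hbt
    (fun r hr => ⟨min'_le _ _ hr, (hIi r hr).2⟩)
    (noUnionAbove_of_not_hEdge hIi hb (hnextNonadj i hiIcc))
  have hGα : #G ≤ α := hα.2 ⟨G, hGF, hG, rfl⟩
  rw [← Nat.cast_sum]
  omega

/-- Lemma 3: let `α` be the size of the largest union-free subfamily of `F`, and
suppose the vertex set `{1, …, t}` of the auxiliary graph `H` is partitioned into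
sets `I 1, …, I s` by the greedy algorithm:
* (`hmin`) each `I i` begins with the least vertex not lying in any previously
  chosen set (so `I 1` begins with vertex `1`);
* (`hnextNonadj`) after an element `v` of `I i`, the next element `w` of `I i` is
  not adjacent to `v`;
* (`hnextMin`) `w` is the *least* vertex above `v` lying in no previously chosen
  set and not adjacent to `v`, and elements are added until no further vertex can
  be added (if `u > v` is available and not adjacent to `v`, then `I i` contains
  some `w` with `v < w ≤ u`).

Then for every `i > 1`, `∑_{j ∈ I i} |𝓕_j| ≤ α - 2i + 3`. -/
theorem sum_levels_greedy_le (F : Finset (Finset ℕ)) (α : ℕ)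
    (hα : IsGreatest {k | ∃ G ⊆ F, UnionFree G ∧ G.card = k} α)
    (s : ℕ) (I : ℕ → Finset ℕ)
    (hsub : ∀ i ∈ Finset.Icc 1 s, I i ⊆ Finset.Icc 1 (famHeight F))
    (hne : ∀ i ∈ Finset.Icc 1 s, (I i).Nonempty)
    (hcover : ∀ v ∈ Finset.Icc 1 (famHeight F), ∃ i ∈ Finset.Icc 1 s, v ∈ I i)
    (hdisj : ∀ i ∈ Finset.Icc 1 s, ∀ j ∈ Finset.Icc 1 s, i ≠ j → Disjoint (I i) (I j))
    (hmin : ∀ i ∈ Finset.Icc 1 s, ∀ v ∈ I i, (∀ w ∈ I i, v ≤ w) →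
      ∀ u ∈ Finset.Icc 1 (famHeight F), u ∉ prevSets I i → v ≤ u)
    (hnextNonadj : ∀ i ∈ Finset.Icc 1 s, ∀ v ∈ I i, ∀ w ∈ I i, v < w →
      (∀ x ∈ I i, v < x → w ≤ x) → ¬ HEdge F v w)
    (hnextMin : ∀ i ∈ Finset.Icc 1 s, ∀ v ∈ I i, ∀ u ∈ Finset.Icc 1 (famHeight F),
      v < u → u ∉ prevSets I i → ¬ HEdge F v u → ∃ w ∈ I i, v < w ∧ w ≤ u) :
    ∀ i, 1 < i → i ≤ s →
      ((∑ j ∈ I i, (level F j).card : ℤ)) ≤ (α : ℤ) - 2 * (i : ℤ) + 3 :=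
  sum_levels_greedy_le_general F α hα s I hsub hne hdisj hmin hnextNonadj hnextMin
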